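/- For the structure monoid S = {0,1}, the generated structure category Δ_S equals the class of strictly increasing functions between finite ordinals, and this is strictly contained in Δ^S, the class of all injections. In particular, strictly increasing functions between finite ordinals form a structure category: they contain identities and are closed under composition, coproducts of morphisms, and similarity components. -/

import Mathlib

/-- The element of `Fin (∑ i, k i)` determined by block `p.1` and offset `p.2`. -/
def sigmaToFin {n : ℕ} {k : Fin n → ℕ} (p : (i : Fin n) × Fin (k i)) : Fin (∑ i, k i) :=
  ⟨(∑ j ∈ Finset.univ.filter fun j => j < p.1, k j) + p.2.val, by
    have hsub := Finset.sum_le_sum_of_subset (f := k)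
      (Finset.subset_univ (insert p.1 (Finset.univ.filter fun j => j < p.1)))
    rw [Finset.sum_insert (by simp)] at hsub
    have := p.2.isLt
    omega⟩

/-- Decomposition of an element of `Fin (∑ i, k i)` into a block index and an offset. -/
def finToSigma {n : ℕ} {k : Fin n → ℕ} (p : Fin (∑ i, k i)) : (i : Fin n) × Fin (k i) :=
  (List.ofFn fun i => List.ofFn fun x : Fin (k i) =>
    (⟨i, x⟩ : (i : Fin n) × Fin (k i))).flatten.get (Fin.cast (by simp [Function.comp_def, List.sum_ofFn]) p)

/-- Coproduct of two functions between finite ordinals, acting blockwise. -/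
def coprodMap {m₁ n₁ m₂ n₂ : ℕ} (f : Fin m₁ → Fin n₁) (g : Fin m₂ → Fin n₂) :
    Fin (m₁ + m₂) → Fin (n₁ + n₂) :=
  finSumFinEquiv ∘ Sum.map f g ∘ finSumFinEquiv.symm

/-- The similarity component `θ'_{k₁,…,kₙ}` of `θ : [m] → [n]`. -/
def simComp {m n : ℕ} (θ : Fin m → Fin n) (k : Fin n → ℕ) :
    Fin (∑ i, k (θ i)) → Fin (∑ j, k j) :=
  fun p => sigmaToFin ⟨θ (finToSigma p).1, (finToSigma p).2⟩

/-- Cardinality of the fiber of `f` over `i`. -/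
def fiberCard {m n : ℕ} (f : Fin m → Fin n) (i : Fin n) : ℕ :=
  (Finset.univ.filter fun x => f x = i).card

/-- A structure category: a wide subcategory of `FinOrd` closed under coproducts of
morphisms and under similarity components. -/
structure IsStructCat (Δ : ∀ m n : ℕ, Set (Fin m → Fin n)) : Prop where
  id_mem : ∀ n, id ∈ Δ n n
  comp_mem : ∀ {k m n : ℕ} (f : Fin k → Fin m) (g : Fin m → Fin n),
    f ∈ Δ k m → g ∈ Δ m n → g ∘ f ∈ Δ k n
  coprod_mem : ∀ {m₁ n₁ m₂ n₂ : ℕ} (f : Fin m₁ → Fin n₁) (g : Fin m₂ → Fin n₂),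
    f ∈ Δ m₁ n₁ → g ∈ Δ m₂ n₂ → coprodMap f g ∈ Δ (m₁ + m₂) (n₁ + n₂)
  sim_mem : ∀ {m n : ℕ} (θ : Fin m → Fin n), θ ∈ Δ m n → ∀ k : Fin n → ℕ,
    simComp θ k ∈ Δ (∑ i, k (θ i)) (∑ j, k j)

/-- A structure monoid: a subset of ℕ containing 1 and closed under `I`-indexed sums. -/
def IsStructMonoid (I : Set ℕ) : Prop :=
  1 ∈ I ∧ ∀ k ∈ I, ∀ a : Fin k → ℕ, (∀ i, a i ∈ I) → (∑ i, a i) ∈ I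

/-- `Δ^I` : functions all of whose fibers have cardinality in `I`. -/
def DeltaUp (I : Set ℕ) : ∀ m n : ℕ, Set (Fin m → Fin n) :=
  fun _ _ => {f | ∀ i, fiberCard f i ∈ I}

/-- The unique map `[n] → [1]`. -/
def bang (n : ℕ) : Fin n → Fin 1 := fun _ => 0

/-- `Δ_I` : the smallest structure category containing the maps `[n] → [1]` for `n ∈ I`. -/
def GenDelta (I : Set ℕ) : ∀ m n : ℕ, Set (Fin m → Fin n) := fun m n =>
  {f | ∀ Δ : ∀ m n : ℕ, Set (Fin m → Fin n), IsStructCat Δ →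
    (∀ k ∈ I, bang k ∈ Δ k 1) → f ∈ Δ m n}

/-! ### Auxiliary lemmas -/

lemma flatten_ofFn_getElem? {α : Type*} : ∀ (n : ℕ) (g : Fin n → List α) (i : Fin n) (x : ℕ)
    (hx : x < (g i).length),
    (List.ofFn g).flatten[(∑ j ∈ Finset.univ.filter (fun j => j < i), (g j).length) + x]? =
      some ((g i)[x])
  | 0, g, i, x, hx => i.elim0
  | n+1, g, i, x, hx => by
    rw [List.ofFn_succ, List.flatten_cons]
    rcases Fin.eq_zero_or_eq_succ i with hi | ⟨i', hi⟩
    · subst hi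
      have hs : (Finset.univ.filter (fun j => j < (0 : Fin (n+1)))) = ∅ := by
        apply Finset.filter_false_of_mem; intro j _; simp [Fin.not_lt_zero]
      simp only [hs, Finset.sum_empty, Nat.zero_add]
      rw [List.getElem?_append_left hx, List.getElem?_eq_getElem hx]
    · subst hi
      have hs : (∑ j ∈ Finset.univ.filter (fun j => j < i'.succ), (g j).length)
          = (g 0).length + ∑ j ∈ Finset.univ.filter (fun j => j < i'), ((g ∘ Fin.succ) j).length := by
        rw [Finset.sum_filter, Finset.sum_filter, Fin.sum_univ_succ]
        simp [Fin.succ_lt_succ_iff, Fin.succ_pos]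
      rw [hs, Nat.add_assoc, List.getElem?_append_right (by omega)]
      have h2 := flatten_ofFn_getElem? n (g ∘ Fin.succ) i' x hx
      simpa [Function.comp_def] using h2

lemma finToSigma_sigmaToFin {n : ℕ} {k : Fin n → ℕ} (p : (i : Fin n) × Fin (k i)) :
    finToSigma (sigmaToFin p) = p := by
  obtain ⟨i, x⟩ := p
  unfold finToSigma
  set g : Fin n → List ((i : Fin n) × Fin (k i)) :=
    fun i => List.ofFn fun x : Fin (k i) => (⟨i, x⟩ : (i : Fin n) × Fin (k i)) with hg
  have hlen : ∀ j, (g j).length = k j := by intro j; simp [hg]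
  have hx : (x : ℕ) < (g i).length := by rw [hlen]; exact x.isLt
  have key := flatten_ofFn_getElem? n g i x hx
  have hsum : (∑ j ∈ Finset.univ.filter (fun j => j < i), (g j).length)
      = ∑ j ∈ Finset.univ.filter (fun j => j < i), k j :=
    Finset.sum_congr rfl fun j _ => hlen j
  rw [hsum] at key
  have hval : ((List.ofFn g).flatten.get
      (Fin.cast (by simp [hg, Function.comp_def, List.sum_ofFn]) (sigmaToFin ⟨i, x⟩)))
      = (g i)[(x : ℕ)] := by
    rw [List.get_eq_getElem, ← Option.some_inj, ← List.getElem?_eq_getElem]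
    exact key
  rw [hval]
  simp [hg]

lemma sum_lt_sum_of_fst_lt {n : ℕ} (k : Fin n → ℕ) {i j : Fin n} (h : i < j) :
    (∑ l ∈ Finset.univ.filter fun l => l < i, k l) + k i ≤
      ∑ l ∈ Finset.univ.filter fun l => l < j, k l := by
  have hsub : insert i (Finset.univ.filter fun l => l < i) ⊆
      (Finset.univ.filter fun l => l < j) := by
    intro l hl
    simp only [Finset.mem_insert, Finset.mem_filter, Finset.mem_univ, true_and] at hl ⊢
    rcases hl with rfl | hl
    · exact h
    · exact hl.trans h
  have := Finset.sum_le_sum_of_subset (f := k) hsub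
  rw [Finset.sum_insert (by simp)] at this
  omega

lemma sigmaToFin_val {n : ℕ} {k : Fin n → ℕ} (p : (i : Fin n) × Fin (k i)) :
    (sigmaToFin p).val = (∑ j ∈ Finset.univ.filter fun j => j < p.1, k j) + p.2.val := rfl

lemma sigmaToFin_lt_of_fst_lt {n : ℕ} {k : Fin n → ℕ} {p q : (i : Fin n) × Fin (k i)}
    (h : p.1 < q.1) : sigmaToFin p < sigmaToFin q := by
  have h1 := sum_lt_sum_of_fst_lt k h
  have h2 := p.2.isLt
  rw [Fin.lt_def, sigmaToFin_val, sigmaToFin_val]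
  omega

lemma sigmaToFin_lt_of_snd_lt {n : ℕ} {k : Fin n → ℕ} {i : Fin n} {x y : Fin (k i)}
    (h : x < y) : sigmaToFin ⟨i, x⟩ < sigmaToFin ⟨i, y⟩ := by
  rw [Fin.lt_def, sigmaToFin_val, sigmaToFin_val]
  exact Nat.add_lt_add_left h _

lemma sigmaToFin_lt_of_eq_lt {n : ℕ} {k : Fin n → ℕ} {p q : (i : Fin n) × Fin (k i)}
    (h1 : p.1 = q.1) (h2 : p.2.val < q.2.val) : sigmaToFin p < sigmaToFin q := by
  have hs : (∑ j ∈ Finset.univ.filter fun j => j < p.1, k j)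
      = ∑ j ∈ Finset.univ.filter fun j => j < q.1, k j := by rw [h1]
  rw [Fin.lt_def, sigmaToFin_val, sigmaToFin_val]
  omega

lemma sigmaToFin_injective {n : ℕ} {k : Fin n → ℕ} :
    Function.Injective (sigmaToFin (n := n) (k := k)) := by
  intro p q h
  obtain ⟨i, x⟩ := p; obtain ⟨j, y⟩ := q
  rcases lt_trichotomy i j with hij | rfl | hij
  · exact absurd h (sigmaToFin_lt_of_fst_lt hij).ne
  · rcases lt_trichotomy x y with hxy | rfl | hxy
    · exact absurd h (sigmaToFin_lt_of_snd_lt hxy).ne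
    · rfl
    · exact absurd h.symm (sigmaToFin_lt_of_snd_lt hxy).ne
  · exact absurd h.symm (sigmaToFin_lt_of_fst_lt hij).ne

lemma sigmaToFin_finToSigma {n : ℕ} {k : Fin n → ℕ} (q : Fin (∑ i, k i)) :
    sigmaToFin (finToSigma q) = q := by
  have hbij : Function.Bijective (sigmaToFin (n := n) (k := k)) := by
    rw [Fintype.bijective_iff_injective_and_card]
    exact ⟨sigmaToFin_injective, by simp⟩
  obtain ⟨p, rfl⟩ := hbij.2 q
  rw [finToSigma_sigmaToFin]

/-- Reflection: `sigmaToFin` order comparison determines lex order. -/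
lemma lex_of_sigmaToFin_lt {n : ℕ} {k : Fin n → ℕ} {p q : (i : Fin n) × Fin (k i)}
    (h : sigmaToFin p < sigmaToFin q) :
    p.1 < q.1 ∨ ∃ (hfst : p.1 = q.1), p.2.val < q.2.val := by
  obtain ⟨i, x⟩ := p; obtain ⟨j, y⟩ := q
  rcases lt_trichotomy i j with hij | rfl | hij
  · exact Or.inl hij
  · rcases lt_trichotomy x y with hxy | rfl | hxy
    · exact Or.inr ⟨rfl, hxy⟩
    · exact absurd h (lt_irrefl _)
    · exact absurd (h.trans (sigmaToFin_lt_of_snd_lt hxy)) (lt_irrefl _)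
  · exact absurd (h.trans (sigmaToFin_lt_of_fst_lt hij)) (lt_irrefl _)

lemma strictMono_simComp {m n : ℕ} {θ : Fin m → Fin n} (hθ : StrictMono θ) (k : Fin n → ℕ) :
    StrictMono (simComp θ k) := by
  intro p q hpq
  have hp := sigmaToFin_finToSigma (k := fun i => k (θ i)) p
  have hq := sigmaToFin_finToSigma (k := fun i => k (θ i)) q
  have hlt : sigmaToFin (finToSigma p) < sigmaToFin (finToSigma q) := by
    rw [hp, hq]; exact hpq
  rcases lex_of_sigmaToFin_lt hlt with h1 | ⟨h1, h2⟩
  · exact sigmaToFin_lt_of_fst_lt (hθ h1)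
  · exact sigmaToFin_lt_of_eq_lt (congrArg θ h1) h2

lemma coprodMap_left {m₁ n₁ m₂ n₂ : ℕ} (f : Fin m₁ → Fin n₁) (g : Fin m₂ → Fin n₂)
    (x : Fin (m₁ + m₂)) (h : x.val < m₁) :
    coprodMap f g x = Fin.castAdd n₂ (f ⟨x.val, h⟩) := by
  have hx : x = Fin.castAdd m₂ ⟨x.val, h⟩ := by ext; rfl
  rw [coprodMap, Function.comp_apply, Function.comp_apply]
  conv_lhs => rw [hx]
  rw [finSumFinEquiv_symm_apply_castAdd]
  rfl

lemma coprodMap_right {m₁ n₁ m₂ n₂ : ℕ} (f : Fin m₁ → Fin n₁) (g : Fin m₂ → Fin n₂)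
    (x : Fin (m₁ + m₂)) (h : m₁ ≤ x.val) :
    coprodMap f g x = Fin.natAdd n₁ (g ⟨x.val - m₁, by omega⟩) := by
  have hx : x = Fin.natAdd m₁ ⟨x.val - m₁, by omega⟩ := by ext; simp; omega
  rw [coprodMap, Function.comp_apply, Function.comp_apply]
  conv_lhs => rw [hx]
  rw [finSumFinEquiv_symm_apply_natAdd]
  rfl

lemma strictMono_coprodMap {m₁ n₁ m₂ n₂ : ℕ} {f : Fin m₁ → Fin n₁} {g : Fin m₂ → Fin n₂}
    (hf : StrictMono f) (hg : StrictMono g) : StrictMono (coprodMap f g) := by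
  intro x y hxy
  rw [Fin.lt_def] at hxy ⊢
  by_cases hx : x.val < m₁
  · rw [coprodMap_left f g x hx]
    by_cases hy : y.val < m₁
    · rw [coprodMap_left f g y hy]
      simpa using hf (show (⟨x.val, hx⟩ : Fin m₁) < ⟨y.val, hy⟩ from hxy)
    · rw [coprodMap_right f g y (by omega)]
      simp only [Fin.coe_castAdd, Fin.coe_natAdd]
      have := (f ⟨x.val, hx⟩).isLt
      omega
  · rw [coprodMap_right f g x (by omega)]
    have hy : m₁ ≤ y.val := by omega
    rw [coprodMap_right f g y hy]
    simp only [Fin.coe_natAdd]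
    have := hg (show (⟨x.val - m₁, by omega⟩ : Fin m₂) < ⟨y.val - m₁, by omega⟩ by
      rw [Fin.lt_def]; simp; omega)
    rw [Fin.lt_def] at this
    omega

lemma strictMono_isStructCat : IsStructCat (fun m n => {f : Fin m → Fin n | StrictMono f}) := by
  constructor
  · intro n; exact strictMono_id
  · intro k m n f g hf hg; exact hg.comp hf
  · intro m₁ n₁ m₂ n₂ f g hf hg; exact strictMono_coprodMap hf hg
  · intro m n θ hθ k; exact strictMono_simComp hθ k

lemma genDelta_isStructCat (I : Set ℕ) : IsStructCat (GenDelta I) := by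
  constructor
  · intro n Δ hΔ hb; exact hΔ.id_mem n
  · intro k m n f g hf hg Δ hΔ hb; exact hΔ.comp_mem f g (hf Δ hΔ hb) (hg Δ hΔ hb)
  · intro m₁ n₁ m₂ n₂ f g hf hg Δ hΔ hb; exact hΔ.coprod_mem f g (hf Δ hΔ hb) (hg Δ hΔ hb)
  · intro m n θ hθ k Δ hΔ hb; exact hΔ.sim_mem θ (hθ Δ hΔ hb) k

lemma bang_mem_genDelta {I : Set ℕ} {k : ℕ} (hk : k ∈ I) : bang k ∈ GenDelta I k 1 :=
  fun _ _ hb => hb k hk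

lemma strictMono_mem_genDelta : ∀ (n m : ℕ) (f : Fin m → Fin n), StrictMono f →
    f ∈ GenDelta {0, 1} m n
  | 0, m, f, hf => by
    have hm : m = 0 := by
      cases m with
      | zero => rfl
      | succ m' => exact (f 0).elim0
    subst hm
    have : f = id := funext fun x => x.elim0
    rw [this]
    exact (genDelta_isStructCat _).id_mem 0
  | n+1, m, f, hf => by
    by_cases hlast : ∃ x, f x = Fin.last n
    · obtain ⟨x₀, hx₀⟩ := hlast
      cases m with
      | zero => exact x₀.elim0
      | succ m' =>
        have hx₀' : x₀ = Fin.last m' := by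
          by_contra hne
          have hlt : x₀ < Fin.last m' := (Fin.le_last x₀).lt_of_ne hne
          have := hf hlt
          rw [hx₀] at this
          exact absurd (this.trans_le (Fin.le_last _)) (lt_irrefl _)
        subst hx₀'
        have hval : ∀ y : Fin m', (f y.castSucc).val < n := by
          intro y
          have := hf (Fin.castSucc_lt_last y)
          rw [hx₀, Fin.lt_def, Fin.val_last] at this
          exact this
        set f' : Fin m' → Fin n := fun y => ⟨(f y.castSucc).val, hval y⟩ with hf'
        have hf'mono : StrictMono f' := by
          intro a b hab
          rw [Fin.lt_def]
          exact hf (show a.castSucc < b.castSucc by rwa [Fin.castSucc_lt_castSucc_iff])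
        have hmem := (genDelta_isStructCat {0, 1}).coprod_mem f' (bang 1)
          (strictMono_mem_genDelta n m' f' hf'mono) (bang_mem_genDelta (by simp))
        have heq : f = coprodMap f' (bang 1) := by
          funext x
          by_cases hx : x.val < m'
          · rw [coprodMap_left f' (bang 1) x hx]
            have hcs : (⟨x.val, hx⟩ : Fin m').castSucc = x := by ext; rfl
            ext
            show (f x).val = (f (⟨x.val, hx⟩ : Fin m').castSucc).val
            rw [hcs]
          · have hx' : x = Fin.last m' := by
              ext; have := x.isLt; simp only [Fin.val_last]; omega
            have hfx : f x = Fin.last n := by rw [hx']; exact hx₀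
            rw [coprodMap_right f' (bang 1) x (by omega), hfx]
            ext
            simp [bang]
        rw [heq]
        exact hmem
    · push_neg at hlast
      have hval : ∀ x, (f x).val < n := by
        intro x
        have h1 := (f x).isLt
        have h2 : (f x).val ≠ n := by
          intro hc
          exact hlast x (by ext; simp [hc])
        omega
      set f' : Fin m → Fin n := fun x => ⟨(f x).val, hval x⟩ with hf'
      have hf'mono : StrictMono f' := fun a b hab => hf hab
      have hmem := (genDelta_isStructCat {0, 1}).coprod_mem f' (bang 0)
        (strictMono_mem_genDelta n m f' hf'mono) (bang_mem_genDelta (by simp))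
      have heq : f = coprodMap f' (bang 0) := by
        funext x
        rw [coprodMap_left f' (bang 0) x x.isLt]
        ext
        rfl
      rw [heq]
      exact hmem

lemma genDelta_eq_strictMono (m n : ℕ) :
    GenDelta {0, 1} m n = {f : Fin m → Fin n | StrictMono f} := by
  ext f
  constructor
  · intro hf
    exact hf _ strictMono_isStructCat (by
      intro k hk
      rcases hk with rfl | rfl
      · intro x y hxy; exact x.elim0
      · intro x y hxy
        exact absurd (Subsingleton.elim x y ▸ hxy) (lt_irrefl _))
  · intro hf
    exact strictMono_mem_genDelta n m f hf

lemma deltaUp_eq_injective (m n : ℕ) :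
    DeltaUp {0, 1} m n = {f : Fin m → Fin n | Function.Injective f} := by
  ext f
  constructor
  · intro hf x y hxy
    have h := hf (f x)
    simp only [fiberCard, Set.mem_insert_iff, Set.mem_singleton_iff] at h
    have hcard : (Finset.univ.filter fun z => f z = f x).card ≤ 1 := by omega
    have hx : x ∈ Finset.univ.filter fun z => f z = f x := by simp
    have hy : y ∈ Finset.univ.filter fun z => f z = f x := by simp [hxy]
    exact Finset.card_le_one.mp hcard x hx y hy
  · intro hf i
    simp only [Set.mem_insert_iff, Set.mem_singleton_iff]
    have hcard : (Finset.univ.filter fun z => f z = i).card ≤ 1 :=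
      Finset.card_le_one.mpr fun a ha b hb => by
        simp only [Finset.mem_filter] at ha hb
        exact hf (ha.2.trans hb.2.symm)
    unfold fiberCard
    omega

/-- `Δ_{0,1}` equals the class of strictly increasing maps, which is strictly contained in
`Δ^{0,1}` (the injections); moreover strictly increasing maps form a structure category. -/
theorem stmt_7 :
    (∀ m n : ℕ, GenDelta {0, 1} m n = {f : Fin m → Fin n | StrictMono f}) ∧
    (∀ m n : ℕ, GenDelta {0, 1} m n ⊆ DeltaUp {0, 1} m n) ∧
    (∀ m n : ℕ, DeltaUp {0, 1} m n = {f : Fin m → Fin n | Function.Injective f}) ∧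
    (∃ (m n : ℕ) (f : Fin m → Fin n), Function.Injective f ∧ f ∉ GenDelta {0, 1} m n) ∧
    IsStructCat (fun m n => {f : Fin m → Fin n | StrictMono f}) := by
  refine ⟨genDelta_eq_strictMono, ?_, deltaUp_eq_injective, ?_, strictMono_isStructCat⟩
  · intro m n f hf
    rw [genDelta_eq_strictMono] at hf
    rw [deltaUp_eq_injective]
    exact hf.injective
  · refine ⟨2, 2, Fin.rev, Fin.rev_injective, ?_⟩
    rw [genDelta_eq_strictMono]
    intro hmono
    have := hmono (show (0 : Fin 2) < 1 by decide)
    revert this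
    decide
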